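/- First-order regret conversion: for all reals R, L̃, A with L̃ ≥ 0 and A ≥ 0, if R ≤ √( (R + 2 L̃) · A ) (where in particular R + 2L̃ ≥ 0), then R ≤ √(2 L̃ A) + A. -/
import Mathlib

/-- **First-order regret conversion.** For reals `R`, `L̃ ≥ 0`, `A ≥ 0` with
`R + 2 L̃ ≥ 0`: if `R ≤ √((R + 2 L̃) A)` then `R ≤ √(2 L̃ A) + A`. -/
theorem first_order_regret_conversion (R Lt A : ℝ)
    (hLt : 0 ≤ Lt) (hA : 0 ≤ A) (hpos : 0 ≤ R + 2 * Lt)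
    (hR : R ≤ Real.sqrt ((R + 2 * Lt) * A)) :
    R ≤ Real.sqrt (2 * Lt * A) + A := by
  by_contra h
  push_neg at h
  have hs : 0 ≤ Real.sqrt (2 * Lt * A) := Real.sqrt_nonneg _
  have hRpos : 0 < R := lt_of_le_of_lt (by linarith) h
  have hsq : R ^ 2 ≤ (R + 2 * Lt) * A := by
    have h2 : R ^ 2 ≤ Real.sqrt ((R + 2 * Lt) * A) ^ 2 := by
      apply pow_le_pow_left₀ hRpos.le hR
    rwa [Real.sq_sqrt (by positivity)] at h2
  have hs2 : Real.sqrt (2 * Lt * A) ^ 2 = 2 * Lt * A :=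
    Real.sq_sqrt (by positivity)
  nlinarith [sq_nonneg (R - Real.sqrt (2 * Lt * A) - A), mul_pos hRpos hRpos]
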